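/- Let $C$ be a coalgebra over a commutative ring $\mathbf{k}$, and let $g_1,\ldots,g_n$ be grouplike elements of $C$. If $c_1,\ldots,c_n \in \mathbf{k}$ satisfy $\sum_{i=1}^n c_i g_i = 0$ in $C$, then $c_i \prod_{j\neq i}(g_i - g_j) = 0$ in the symmetric algebra $\mathrm{Sym}\, C$ for each $i$. -/

import Mathlib

open TensorProduct

variable (k : Type*) [CommRing k] (C : Type*) [AddCommGroup C] [Module k C]

/-- The relation whose `RingQuot` is the symmetric algebra of the `k`-module `C`. -/
def SymRel : TensorAlgebra k C → TensorAlgebra k C → Prop := fun x y =>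
  ∃ a b : C, x = TensorAlgebra.ι k a * TensorAlgebra.ι k b ∧
    y = TensorAlgebra.ι k b * TensorAlgebra.ι k a

/-- The symmetric algebra `Sym C` of the `k`-module `C`, realized as the quotient of the
tensor algebra `T(C)` by the commutators of elements of `C`. -/
abbrev SymOfModule := RingQuot (SymRel k C)

/-- The canonical inclusion `C → Sym C`. -/
noncomputable def symIncl (c : C) : SymOfModule k C :=
  RingQuot.mkAlgHom k (SymRel k C) (TensorAlgebra.ι k c)

/-- An element `g` of a `k`-coalgebra is grouplike if `Δ g = g ⊗ g` and `ε g = 1`. -/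
def IsGrouplike [Coalgebra k C] (g : C) : Prop :=
  Coalgebra.comul (R := k) g = g ⊗ₜ[k] g ∧ Coalgebra.counit (R := k) g = 1

/- ### Auxiliary development -/

lemma symMulComm (x y : SymOfModule k C) : x * y = y * x := by
  obtain ⟨x', rfl⟩ := RingQuot.mkAlgHom_surjective k (SymRel k C) x
  obtain ⟨y', rfl⟩ := RingQuot.mkAlgHom_surjective k (SymRel k C) y
  set f := RingQuot.mkAlgHom k (SymRel k C)
  induction x' using TensorAlgebra.induction with
  | algebraMap r => simp [Algebra.commutes]
  | add a b ha hb => rw [map_add, add_mul, mul_add, ha, hb]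
  | mul a b ha hb => rw [map_mul, mul_assoc, hb, ← mul_assoc, ha, mul_assoc]
  | ι a =>
    induction y' using TensorAlgebra.induction with
    | algebraMap r => simp [Algebra.commutes]
    | add a b ha hb => rw [map_add, add_mul, mul_add, ha, hb]
    | mul p q hp hq => rw [map_mul, ← mul_assoc, hp, mul_assoc, hq, ← mul_assoc]
    | ι b =>
      have hr : SymRel k C (TensorAlgebra.ι k a * TensorAlgebra.ι k b)
          (TensorAlgebra.ι k b * TensorAlgebra.ι k a) := ⟨a, b, rfl, rfl⟩
      have := RingQuot.mkAlgHom_rel k hr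
      simpa [map_mul] using this

noncomputable instance : CommRing (SymOfModule k C) :=
  { (inferInstance : Ring (SymOfModule k C)) with mul_comm := symMulComm k C }

/-- `symIncl` as a linear map. -/
noncomputable def symInclL : C →ₗ[k] SymOfModule k C :=
  (RingQuot.mkAlgHom k (SymRel k C)).toLinearMap ∘ₗ TensorAlgebra.ι k

lemma symInclL_apply (a : C) : symInclL k C a = symIncl k C a := rfl

section Aux
variable [Coalgebra k C]

/-- Iterated comultiplication followed by multiplication in `Sym C`. -/
noncomputable def phi : ℕ → (C →ₗ[k] SymOfModule k C)
  | 0 => Algebra.linearMap k (SymOfModule k C) ∘ₗ Coalgebra.counit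
  | m + 1 => LinearMap.mul' k (SymOfModule k C) ∘ₗ
      TensorProduct.map (symInclL k C) (phi m) ∘ₗ Coalgebra.comul

lemma phi_grouplike (m : ℕ) {g : C} (hg : IsGrouplike k C g) :
    phi k C m g = (symIncl k C g) ^ m := by
  induction m with
  | zero => simp [phi, hg.2]
  | succ m ih =>
    rw [phi, LinearMap.comp_apply, LinearMap.comp_apply, hg.1]
    simp [ih, pow_succ, mul_comm, symInclL_apply]

lemma power_sum (n : ℕ) (g : Fin n → C) (hg : ∀ i, IsGrouplike k C (g i))
    (c : Fin n → k) (hc : ∑ i, c i • g i = 0) (m : ℕ) :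
    ∑ j, c j • (symIncl k C (g j)) ^ m = 0 := by
  have : (phi k C m) (∑ i, c i • g i) = 0 := by rw [hc, map_zero]
  rw [map_sum] at this
  simpa [map_smul, phi_grouplike k C m (hg _)] using this

end Aux

/-- **Theorem.** Let `g 1, …, g n` be grouplike elements of a `k`-coalgebra `C` and
`c 1, …, c n ∈ k` with `∑ i, c i • g i = 0`. Then `c i • ∏_{j ≠ i} (g i - g j) = 0`
in the symmetric algebra `Sym C` for each `i`. -/
theorem stmt1 [Coalgebra k C] (n : ℕ) (g : Fin n → C) (hg : ∀ i, IsGrouplike k C (g i))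
    (c : Fin n → k) (hc : ∑ i, c i • g i = 0) :
    ∀ i : Fin n, c i •
      (((List.finRange n).filter (· ≠ i)).map
        (fun j => symIncl k C (g i) - symIncl k C (g j))).prod = 0 := by
  intro i
  set L := (List.finRange n).filter (· ≠ i) with hL
  set p : Polynomial (SymOfModule k C) :=
    (L.map (fun j => Polynomial.X - Polynomial.C (symIncl k C (g j)))).prod with hp
  -- eval of p at symIncl (g j)
  have heval : ∀ x : SymOfModule k C,
      p.eval x = (L.map (fun j => x - symIncl k C (g j))).prod := by
    intro x
    rw [hp, Polynomial.eval_list_prod, List.map_map]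
    congr 1
    simp [Function.comp]
  -- eval vanishes at g j for j ≠ i
  have hroot : ∀ j, j ≠ i → p.eval (symIncl k C (g j)) = 0 := by
    intro j hj
    rw [heval]
    apply List.prod_eq_zero
    have hjL : j ∈ L := by
      rw [hL]; simp [List.mem_filter, hj]
    have : (0 : SymOfModule k C) = symIncl k C (g j) - symIncl k C (g j) := by ring
    rw [this]
    exact List.mem_map_of_mem hjL
  -- sum of c j • eval = 0
  have hsum : ∑ j, c j • p.eval (symIncl k C (g j)) = 0 := by
    have h := fun j : Fin n => Polynomial.eval_eq_sum_range
      (x := symIncl k C (g j)) (p := p)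
    calc ∑ j, c j • p.eval (symIncl k C (g j))
        = ∑ j, c j • ∑ m ∈ Finset.range (p.natDegree + 1),
            p.coeff m * (symIncl k C (g j)) ^ m := by
          simp_rw [fun j => h j]
      _ = ∑ m ∈ Finset.range (p.natDegree + 1),
            p.coeff m * ∑ j, c j • (symIncl k C (g j)) ^ m := by
          simp_rw [Finset.smul_sum, Finset.mul_sum, ← mul_smul_comm]
          exact Finset.sum_comm
      _ = 0 := by
          simp [power_sum k C n g hg c hc]
  -- conclude
  have : c i • p.eval (symIncl k C (g i)) = 0 := by
    rw [← hsum]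
    symm
    apply Finset.sum_eq_single i
    · intro j _ hj; rw [hroot j hj, smul_zero]
    · intro h; exact absurd (Finset.mem_univ i) h
  rw [heval] at this
  exact this
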